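/- arXiv:2411.15406 — 4 statements merged into one kernel-verified Lean document; each statement's English description precedes it below -/
import Mathlib

section
/- If K : T^{2d} → ℝ^d has summable Fourier coefficients, ‖K̂‖_{l^1} = Σ_{λ,η} |K̂(λ,η)| < ∞, then for any finite index set P with k, l ∈ P, the operator |∇_k|^{-1} S_{k,l} maps the space of functions with bounded Fourier coefficients to itself with ‖|∇_k|^{-1} S_{k,l} h‖_{l̂^∞} ≤ ‖K̂‖_{l^1} ‖h‖_{l̂^∞}. -/
/-!
Fix a frequency `ξ` with `ξ_k ≠ 0`. By Cauchy–Schwarz over the `d` components, each term of the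
series defining the coefficient is bounded by `|2πξ_k| · |K̂(λ, η)| · M`; summing over `(λ, η)`
gives `|2πξ_k| · ‖K̂‖_{l¹} · M`, and the multiplier `|2πξ_k|⁻¹` cancels the prefactor exactly.
-/

open MeasureTheory Finset

instance : Fact (0 < (1:ℝ)) := ⟨one_pos⟩

/-- The Fourier coefficient of a function on the torus `(ℝ/ℤ)^ι` at the
frequency `ξ ∈ ℤ^ι`. -/
noncomputable def mFourierCoeff {ι : Type*} [Fintype ι]
    (f : (ι → AddCircle (1:ℝ)) → ℂ) (ξ : ι → ℤ) : ℂ :=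
  ∫ x : ι → AddCircle (1:ℝ), (∏ i, fourier (-(ξ i)) (x i)) * f x

lemma norm_sum_mul_mul_le {n R : Type*} [Fintype n] [SeminormedRing R] (a b c : n → R) {M : ℝ}
    (hM : 0 ≤ M) (hc : ∀ j, ‖c j‖ ≤ M) :
    ‖∑ j, a j * b j * c j‖ ≤ √(∑ j, ‖a j‖ ^ 2) * √(∑ j, ‖b j‖ ^ 2) * M :=
  calc ‖∑ j, a j * b j * c j‖
      ≤ ∑ j, ‖a j‖ * ‖b j‖ * M :=
        norm_sum_le_of_le _ fun j _ => norm_mul₃_le.trans (by gcongr; exact hc j)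
    _ = (∑ j, ‖a j‖ * ‖b j‖) * M := (sum_mul _ _ _).symm
    _ ≤ _ := by gcongr; exact Real.sum_mul_le_sqrt_mul_sqrt _ _ _

lemma norm_two_pi_I_mul_sq (n : ℤ) :
    ‖2 * Real.pi * Complex.I * (n : ℂ)‖ ^ 2 = (2 * Real.pi * (n : ℝ)) ^ 2 := by
  rw [show 2 * Real.pi * Complex.I * (n : ℂ) = ((2 * Real.pi * n : ℝ) : ℂ) * Complex.I by
      push_cast; ring, norm_mul, Complex.norm_I, mul_one, Complex.norm_real, Real.norm_eq_abs,
    sq_abs]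

lemma sqrt_sum_two_pi_mul_sq_pos {n : Type*} [Fintype n] {ξ : n → ℤ} (hξ : ¬∀ j, ξ j = 0) :
    0 < √(∑ j, (2 * Real.pi * (ξ j : ℝ)) ^ 2) := by
  obtain ⟨j, hj⟩ := not_forall.1 hξ
  refine Real.sqrt_pos.2 (sum_pos' (fun j _ => sq_nonneg _) ⟨j, mem_univ _, ?_⟩)
  have : (ξ j : ℝ) ≠ 0 := Int.cast_ne_zero.2 hj
  positivity

/-- If `K : 𝕋^{2d} → ℝ^d` has summable Fourier coefficients,
`‖K̂‖_{l¹} = Σ_{λ,η} |K̂(λ,η)| < ∞`, then for a finite index set `ι ∋ k, l` the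
operator `|∇_k|⁻¹ S_{k,l}` maps functions with bounded Fourier coefficients to
themselves, with `‖|∇_k|⁻¹ S_{k,l} h‖_{l̂^∞} ≤ ‖K̂‖_{l¹} ‖h‖_{l̂^∞}`: each
Fourier coefficient of `|∇_k|⁻¹ S_{k,l} h` is bounded by `‖K̂‖_{l¹} M` whenever
`M` bounds all Fourier coefficients of `h`. -/
theorem stmt5 (d : ℕ) (ι : Type*) [Fintype ι] [DecidableEq ι] (k l : ι)
    (K : ((Fin d ⊕ Fin d) → AddCircle (1:ℝ)) → EuclideanSpace ℝ (Fin d))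
    (hK : Summable fun p : (Fin d → ℤ) × (Fin d → ℤ) =>
      Real.sqrt (∑ j, ‖mFourierCoeff (fun y => ((K y j : ℝ) : ℂ)) (Sum.elim p.1 p.2)‖ ^ 2))
    (h : ((ι × Fin d) → AddCircle (1:ℝ)) → ℂ)
    (M : ℝ) (hM : ∀ ζ : (ι × Fin d) → ℤ, ‖mFourierCoeff h ζ‖ ≤ M) :
    ∀ ξ : (ι × Fin d) → ℤ,
      ‖if ∀ j, ξ (k, j) = 0 then 0 else
          ((1 / Real.sqrt (∑ j, (2 * Real.pi * (ξ (k, j) : ℝ)) ^ 2) : ℝ) : ℂ) *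
            ∑' p : (Fin d → ℤ) × (Fin d → ℤ),
              ∑ j, (2 * Real.pi * Complex.I * (ξ (k, j) : ℂ)) *
                mFourierCoeff (fun y => ((K y j : ℝ) : ℂ)) (Sum.elim p.1 p.2) *
                mFourierCoeff h (fun q =>
                  ξ q - (if q.1 = k then p.1 q.2 else 0) -
                    (if q.1 = l then p.2 q.2 else 0))‖
        ≤ (∑' p : (Fin d → ℤ) × (Fin d → ℤ),
            Real.sqrt (∑ j, ‖mFourierCoeff (fun y => ((K y j : ℝ) : ℂ))
              (Sum.elim p.1 p.2)‖ ^ 2)) * M := by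
  intro ξ
  have hM0 : 0 ≤ M := (norm_nonneg _).trans (hM 0)
  split_ifs with hξ
  · rw [norm_zero]
    exact mul_nonneg (tsum_nonneg fun _ => Real.sqrt_nonneg _) hM0
  set A := √(∑ j, (2 * Real.pi * (ξ (k, j) : ℝ)) ^ 2)
  have hA : 0 < A := sqrt_sum_two_pi_mul_sq_pos hξ
  rw [norm_mul, Complex.norm_real, Real.norm_of_nonneg (by positivity), one_div,
    inv_mul_le_iff₀ hA, ← mul_assoc]
  refine tsum_of_norm_bounded ((hK.hasSum.mul_left A).mul_right M) fun p => ?_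
  simpa only [norm_two_pi_I_mul_sq] using
    norm_sum_mul_mul_le (fun j => 2 * Real.pi * Complex.I * (ξ (k, j) : ℂ)) _ _ hM0 fun _ => hM _
end

section
/- For every integer m ≥ 2, the double sum Σ_{s=0}^{m-2} [(m+1)²/((s+1)²(m-s)²)] · Σ_{u=0}^{m-2-s} (1/(u+1)² + 1/(m-1-s-u)²) is at most 16. -/
lemma sumA4 (N : ℕ) : ∑ n ∈ Finset.range (N+4), (1:ℝ)/((n:ℝ)+1)^2 ≤ 241/144 - 1/((N:ℝ)+4) := by
  induction N with
  | zero =>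
    simp [Finset.sum_range_succ]
    norm_num
  | succ k ih =>
    have h4 : k + 1 + 4 = (k + 4) + 1 := by ring
    rw [h4, Finset.sum_range_succ]
    have key : (1:ℝ)/((↑(k+4):ℝ)+1)^2 ≤ 1/((k:ℝ)+4) - 1/((k:ℝ)+1+4) := by
      push_cast
      rw [div_sub_div _ _ (by positivity) (by positivity),
        div_le_div_iff₀ (by positivity) (by positivity)]
      nlinarith [Nat.cast_nonneg (α := ℝ) k]
    push_cast at ih key ⊢
    linarith

lemma sumA (N : ℕ) : ∑ n ∈ Finset.range N, (1:ℝ)/((n:ℝ)+1)^2 ≤ 241/144 := by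
  have h1 : ∑ n ∈ Finset.range N, (1:ℝ)/((n:ℝ)+1)^2
      ≤ ∑ n ∈ Finset.range (N+4), (1:ℝ)/((n:ℝ)+1)^2 := by
    apply Finset.sum_le_sum_of_subset_of_nonneg
    · exact Finset.range_subset_range.2 (by omega)
    · intro i _ _; positivity
  have h2 := sumA4 N
  have h3 : (0:ℝ) < (N:ℝ) + 4 := by positivity
  have : (0:ℝ) ≤ 1/((N:ℝ)+4) := by positivity
  linarith

lemma sumB (N : ℕ) : ∑ n ∈ Finset.range N, (1:ℝ)/((n:ℝ)+2)^2 ≤ 97/144 := by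
  have h := sumA (N+1)
  rw [Finset.sum_range_succ'] at h
  norm_num at h
  have e : ∑ n ∈ Finset.range N, (1:ℝ)/((n:ℝ)+2)^2
      = ∑ x ∈ Finset.range N, (((x:ℝ)+1+1)^2)⁻¹ := by
    apply Finset.sum_congr rfl; intro i _; rw [one_div]; ring_nf
  rw [e]
  linarith

lemma reflA (K : ℕ) :
    ∑ u ∈ Finset.range K, (1:ℝ)/(((K - u : ℕ):ℝ))^2
      = ∑ u ∈ Finset.range K, (1:ℝ)/((u:ℝ)+1)^2 := by
  have h1 := Finset.sum_range_reflect (fun j => (1:ℝ)/(((j+1 : ℕ):ℝ))^2) K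
  have e1 : ∑ u ∈ Finset.range K, (1:ℝ)/(((K - u : ℕ):ℝ))^2
      = ∑ j ∈ Finset.range K, (1:ℝ)/(((K-1-j+1 : ℕ):ℝ))^2 := by
    apply Finset.sum_congr rfl
    intro u hu
    have hu' : u < K := Finset.mem_range.1 hu
    have : K - 1 - u + 1 = K - u := by omega
    rw [this]
  have e2 : ∑ u ∈ Finset.range K, (1:ℝ)/(((u+1 : ℕ):ℝ))^2
      = ∑ u ∈ Finset.range K, (1:ℝ)/((u:ℝ)+1)^2 := by
    apply Finset.sum_congr rfl; intro u _; push_cast; ring_nf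
  rw [e1, h1, e2]

/-- For every integer `m ≥ 2`, the double sum
`Σ_{s=0}^{m-2} [(m+1)²/((s+1)²(m-s)²)] Σ_{u=0}^{m-2-s} (1/(u+1)² + 1/(m-1-s-u)²)`
is at most `16`. -/
theorem stmt10 (m : ℕ) (hm : 2 ≤ m) :
    (∑ s ∈ Finset.range (m - 1),
      (((m : ℝ) + 1) ^ 2 / (((s : ℝ) + 1) ^ 2 * ((m - s : ℕ) : ℝ) ^ 2)) *
        ∑ u ∈ Finset.range (m - 1 - s),
          ((1 : ℝ) / ((u : ℝ) + 1) ^ 2 + 1 / ((m - 1 - s - u : ℕ) : ℝ) ^ 2)) ≤ 16 := by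
  -- inner sum bound
  have inner_bound : ∀ s ∈ Finset.range (m-1),
      (∑ u ∈ Finset.range (m - 1 - s),
        ((1 : ℝ) / ((u : ℝ) + 1) ^ 2 + 1 / ((m - 1 - s - u : ℕ) : ℝ) ^ 2)) ≤ 241/72 := by
    intro s _
    rw [Finset.sum_add_distrib]
    have h1 := sumA (m-1-s)
    have h2 : ∑ u ∈ Finset.range (m-1-s), (1:ℝ) / ((m - 1 - s - u : ℕ) : ℝ) ^ 2
        ≤ 241/144 := by
      have := reflA (m-1-s)
      calc ∑ u ∈ Finset.range (m-1-s), (1:ℝ) / ((m - 1 - s - u : ℕ) : ℝ) ^ 2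
          = ∑ u ∈ Finset.range (m-1-s), (1:ℝ)/(((m-1-s - u : ℕ):ℝ))^2 := rfl
        _ = ∑ u ∈ Finset.range (m-1-s), (1:ℝ)/((u:ℝ)+1)^2 := this
        _ ≤ 241/144 := sumA _
    linarith
  -- coefficient bound
  have coeff_bound : ∀ s ∈ Finset.range (m-1),
      ((m : ℝ) + 1) ^ 2 / (((s : ℝ) + 1) ^ 2 * ((m - s : ℕ) : ℝ) ^ 2)
        ≤ 2/((s:ℝ)+1)^2 + 2/(((m-s:ℕ)):ℝ)^2 := by
    intro s hs
    have hsm : s < m := by have := Finset.mem_range.1 hs; omega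
    have hcast : ((m - s : ℕ) : ℝ) = (m:ℝ) - s := Nat.cast_sub hsm.le
    rw [hcast]
    have h1 : (0:ℝ) < (s:ℝ) + 1 := by positivity
    have h2 : (0:ℝ) < (m:ℝ) - s := by
      have : (s:ℝ) + 1 ≤ m := by exact_mod_cast hsm
      linarith
    rw [div_le_iff₀ (by positivity)]
    have key : ((m:ℝ)+1)^2 = (((m:ℝ)-s) + ((s:ℝ)+1))^2 := by ring
    rw [key]
    have expand : (2/((s:ℝ)+1)^2 + 2/((m:ℝ)-s)^2) * (((s:ℝ)+1)^2 * ((m:ℝ)-s)^2)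
        = 2*((m:ℝ)-s)^2 + 2*((s:ℝ)+1)^2 := by
      field_simp
    rw [expand]
    nlinarith [sq_nonneg (((m:ℝ)-s) - ((s:ℝ)+1))]
  -- coefficient sum bound
  have coeff_sum : ∑ s ∈ Finset.range (m-1),
      (2/((s:ℝ)+1)^2 + 2/(((m-s:ℕ)):ℝ)^2) ≤ 169/36 := by
    rw [Finset.sum_add_distrib]
    have hA : ∑ s ∈ Finset.range (m-1), 2/((s:ℝ)+1)^2 ≤ 2 * (241/144) := by
      have := sumA (m-1)
      have e : ∑ s ∈ Finset.range (m-1), 2/((s:ℝ)+1)^2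
          = 2 * ∑ s ∈ Finset.range (m-1), (1:ℝ)/((s:ℝ)+1)^2 := by
        rw [Finset.mul_sum]; apply Finset.sum_congr rfl; intro i _; ring
      rw [e]; linarith
    have hB : ∑ s ∈ Finset.range (m-1), 2/(((m-s:ℕ)):ℝ)^2 ≤ 2 * (97/144) := by
      have refl := Finset.sum_range_reflect (fun j => (2:ℝ)/(((m - j : ℕ)):ℝ)^2) (m-1)
      rw [← refl]
      have e : ∑ j ∈ Finset.range (m-1), (2:ℝ)/(((m - (m-1-1-j) : ℕ)):ℝ)^2
          = ∑ j ∈ Finset.range (m-1), (2:ℝ)/((j:ℝ)+2)^2 := by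
        apply Finset.sum_congr rfl
        intro j hj
        have hj' : j < m - 1 := Finset.mem_range.1 hj
        have : m - (m-1-1-j) = j + 2 := by omega
        rw [this]; push_cast; ring_nf
      rw [e]
      have := sumB (m-1)
      have e2 : ∑ j ∈ Finset.range (m-1), (2:ℝ)/((j:ℝ)+2)^2
          = 2 * ∑ j ∈ Finset.range (m-1), (1:ℝ)/((j:ℝ)+2)^2 := by
        rw [Finset.mul_sum]; apply Finset.sum_congr rfl; intro i _; ring
      rw [e2]; linarith
    linarith
  -- combine
  have step1 : (∑ s ∈ Finset.range (m - 1),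
      (((m : ℝ) + 1) ^ 2 / (((s : ℝ) + 1) ^ 2 * ((m - s : ℕ) : ℝ) ^ 2)) *
        ∑ u ∈ Finset.range (m - 1 - s),
          ((1 : ℝ) / ((u : ℝ) + 1) ^ 2 + 1 / ((m - 1 - s - u : ℕ) : ℝ) ^ 2))
      ≤ ∑ s ∈ Finset.range (m-1),
        (2/((s:ℝ)+1)^2 + 2/(((m-s:ℕ)):ℝ)^2) * (241/72) := by
    apply Finset.sum_le_sum
    intro s hs
    have hc := coeff_bound s hs
    have hi := inner_bound s hs
    have hcpos : (0:ℝ) ≤ ((m : ℝ) + 1) ^ 2 / (((s : ℝ) + 1) ^ 2 * ((m - s : ℕ) : ℝ) ^ 2) := by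
      positivity
    have hinner_nonneg : (0:ℝ) ≤ ∑ u ∈ Finset.range (m - 1 - s),
        ((1 : ℝ) / ((u : ℝ) + 1) ^ 2 + 1 / ((m - 1 - s - u : ℕ) : ℝ) ^ 2) := by
      apply Finset.sum_nonneg; intro i _; positivity
    calc (((m : ℝ) + 1) ^ 2 / (((s : ℝ) + 1) ^ 2 * ((m - s : ℕ) : ℝ) ^ 2)) *
          ∑ u ∈ Finset.range (m - 1 - s),
            ((1 : ℝ) / ((u : ℝ) + 1) ^ 2 + 1 / ((m - 1 - s - u : ℕ) : ℝ) ^ 2)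
        ≤ (((m : ℝ) + 1) ^ 2 / (((s : ℝ) + 1) ^ 2 * ((m - s : ℕ) : ℝ) ^ 2)) * (241/72) :=
          mul_le_mul_of_nonneg_left hi hcpos
      _ ≤ (2/((s:ℝ)+1)^2 + 2/(((m-s:ℕ)):ℝ)^2) * (241/72) := by
          apply mul_le_mul_of_nonneg_right hc (by norm_num)
  rw [← Finset.sum_mul] at step1
  have : (∑ s ∈ Finset.range (m-1), (2/((s:ℝ)+1)^2 + 2/(((m-s:ℕ)):ℝ)^2)) * (241/72)
      ≤ (169/36) * (241/72) := by
    apply mul_le_mul_of_nonneg_right coeff_sum (by norm_num)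
  calc _ ≤ _ := step1
    _ ≤ (169/36) * (241/72) := this
    _ ≤ 16 := by norm_num
end

section
/- The polynomial K(x,ρ) := Σ_{ι ≥ ρ} (-1)^{|ι|-1}(|ι|-1)! ∏_{C∈ι} (1-x)(1-2x)···(1-(|C|-1)x), where ρ is a set partition of [m] and the sum is over coarsenings ι of ρ, has vanishing coefficient of x^l for every l < |ρ| - 1. -/
/-!
Let `Y` be a second variable and `Q(s, ρ) = Σ_{ι ≥ ρ} Y (Y - 1) ⋯ (Y - |ι| + 1) ∏_{C ∈ ι} (1 - x) ⋯
(1 - (|C| - 1) x)`, summed over the partitions `ι` of `s` coarsening `ρ`. The coefficient of `Y`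
in `Y (Y - 1) ⋯ (Y - k + 1)` is `(-1)^(k-1) (k-1)!`, so `K(x, ρ)` is the `Y`-coefficient of
`Q([m], ρ)`, and it suffices to show that `Q(s, ρ)` lies in the ideal `(x, Y)^|ρ|`.

This goes by induction on `s`. Every partition of `s ∪ {v}` arises in exactly one way from a
partition of `s`, by adding `{v}` as a block or by adding `v` to a block `C` (which multiplies the
product by `1 - |C| x`). Hence `Q(s ∪ {v}, ρ ∪ {{v}}) = (Y - |s| x) Q(s, ρ)`. If instead `ρ_v` is
`ρ` with the block `B` replaced by `B ∪ {v}`, only the coarsenings in which `v` joins the block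
containing `B` contribute; writing the size of that block as the sum of the sizes of the blocks
`b` of `ρ` inside it gives `Q(s ∪ {v}, ρ_v) = Q(s, ρ) - Σ_{b ∈ ρ} |b| x Q(s, ρ[B ∪ b])`, where
`ρ[B ∪ b]` merges `B` and `b` and so has at least `|ρ| - 1` blocks.
-/

open Finset Polynomial

def IsPartition {α : Type*} [Fintype α] (π : Finset (Finset α)) : Prop :=
  ∅ ∉ π ∧ ∀ x : α, ∃! B, B ∈ π ∧ x ∈ B

def Refines {α : Type*} (π σ : Finset (Finset α)) : Prop :=
  ∀ B ∈ π, ∃ C ∈ σ, B ⊆ C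

namespace Coarsening

variable {α : Type*}

structure IsPartitionOf (s : Finset α) (ι : Finset (Finset α)) : Prop where
  empty_notMem : ∅ ∉ ι
  subset : ∀ C ∈ ι, C ⊆ s
  disjoint : ∀ C ∈ ι, ∀ D ∈ ι, C ≠ D → Disjoint C D
  exists_mem : ∀ x ∈ s, ∃ C ∈ ι, x ∈ C

namespace IsPartitionOf

variable {s : Finset α} {ι : Finset (Finset α)} {C D : Finset α} {x : α}

lemma nonempty (h : IsPartitionOf s ι) (hC : C ∈ ι) : C.Nonempty :=
  nonempty_iff_ne_empty.2 fun h₀ => h.empty_notMem (h₀ ▸ hC)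

lemma eq_of_mem_of_mem (h : IsPartitionOf s ι) (hC : C ∈ ι) (hD : D ∈ ι) (hxC : x ∈ C)
    (hxD : x ∈ D) : C = D :=
  by_contra fun hne => disjoint_left.1 (h.disjoint C hC D hD hne) hxC hxD

lemma eq_of_subset_of_subset (h : IsPartitionOf s ι) (hC : C ∈ ι) (hD : D ∈ ι) {B : Finset α}
    (hB : B.Nonempty) (hBC : B ⊆ C) (hBD : B ⊆ D) : C = D :=
  h.eq_of_mem_of_mem hC hD (hBC hB.choose_spec) (hBD hB.choose_spec)

lemma notMem_of_notMem (h : IsPartitionOf s ι) (hx : x ∉ s) (hC : C ∈ ι) : x ∉ C :=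
  fun hxC => hx (h.subset C hC hxC)

lemma eq_empty (h : IsPartitionOf ∅ ι) : ι = ∅ :=
  eq_empty_of_forall_notMem fun C hC =>
    h.empty_notMem (subset_empty.1 (h.subset C hC) ▸ hC)

end IsPartitionOf

lemma isPartition_iff_isPartitionOf_univ [Fintype α] {ι : Finset (Finset α)} :
    IsPartition ι ↔ IsPartitionOf univ ι := by
  refine ⟨fun ⟨h₀, h⟩ => ⟨h₀, fun C _ => subset_univ C, ?_, ?_⟩,
    fun h => ⟨h.empty_notMem, fun x => ?_⟩⟩
  · intro C hC D hD hne
    refine disjoint_left.2 fun x hxC hxD => hne ?_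
    obtain ⟨B, -, hB⟩ := h x
    exact (hB C ⟨hC, hxC⟩).trans (hB D ⟨hD, hxD⟩).symm
  · exact fun x _ => (h x).exists.imp fun C hC => hC
  · obtain ⟨C, hC, hxC⟩ := h.exists_mem x (mem_univ x)
    exact ⟨C, ⟨hC, hxC⟩, fun D hD => h.eq_of_mem_of_mem hD.1 hC hD.2 hxC⟩

open Classical in
noncomputable def partitions (s : Finset α) : Finset (Finset (Finset α)) :=
  s.powerset.powerset.filter (IsPartitionOf s)

lemma mem_partitions {s : Finset α} {ι : Finset (Finset α)} :
    ι ∈ partitions s ↔ IsPartitionOf s ι := by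
  simp only [partitions, mem_filter, mem_powerset, and_iff_right_iff_imp]
  exact fun h C hC => mem_powerset.2 (h.subset C hC)

variable {s : Finset α} {ι ρ : Finset (Finset α)}

variable (R : Type*) [CommRing R]

noncomputable def blockPoly (n : ℕ) : R[X] :=
  ∏ i ∈ range (n - 1), (1 - C ((i : R) + 1) * X)

noncomputable def weight (ι : Finset (Finset α)) : R[X][X] :=
  descPochhammer R[X] #ι * C (∏ D ∈ ι, blockPoly R #D)

open Classical in
noncomputable def coarseningPoly (s : Finset α) (ρ : Finset (Finset α)) : R[X][X] :=
  ∑ ι ∈ partitions s, if Refines ρ ι then weight R ι else 0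

variable {R}

lemma blockPoly_succ (n : ℕ) : blockPoly R (n + 1) = blockPoly R n * (1 - C (n : R) * X) := by
  cases n with
  | zero => simp [blockPoly]
  | succ n =>
    rw [blockPoly, Nat.add_sub_cancel, prod_range_succ]
    push_cast
    rfl

/-- `P` lies in the `n`-th power of the ideal `(X, Y)` of `R[X][Y]`, `Y` being the outer
variable. -/
def VanishesToOrder (n : ℕ) (P : R[X][X]) : Prop :=
  ∀ j, (X : R[X]) ^ (n - j) ∣ P.coeff j

namespace VanishesToOrder

variable {m n : ℕ} {P Q : R[X][X]}

lemma zero (P : R[X][X]) : VanishesToOrder 0 P := fun j => by simp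

lemma mono (h : VanishesToOrder n P) (hmn : m ≤ n) : VanishesToOrder m P :=
  fun j => (pow_dvd_pow _ (by omega)).trans (h j)

lemma sub (hP : VanishesToOrder n P) (hQ : VanishesToOrder n Q) : VanishesToOrder n (P - Q) :=
  fun j => by rw [coeff_sub]; exact dvd_sub (hP j) (hQ j)

lemma sum {κ : Type*} {t : Finset κ} {f : κ → R[X][X]} (h : ∀ i ∈ t, VanishesToOrder n (f i)) :
    VanishesToOrder n (∑ i ∈ t, f i) :=
  fun j => by rw [finsetSum_coeff]; exact dvd_sum fun i hi => h i hi j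

lemma mul (hP : VanishesToOrder m P) (hQ : VanishesToOrder n Q) :
    VanishesToOrder (m + n) (P * Q) := fun j => by
  rw [coeff_mul]
  refine dvd_sum fun p hp => ?_
  rw [HasAntidiagonal.mem_antidiagonal] at hp
  have h := mul_dvd_mul (hP p.1) (hQ p.2)
  rw [← pow_add] at h
  exact (pow_dvd_pow (X : R[X]) (by omega)).trans h

lemma coeff_coeff_eq_zero (h : VanishesToOrder n P) {j l : ℕ} (hl : l + j < n) :
    (P.coeff j).coeff l = 0 :=
  X_pow_dvd_iff.1 (h j) l (by omega)

end VanishesToOrder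

lemma vanishesToOrder_X : VanishesToOrder 1 (X : R[X][X]) := fun j => by
  rcases j with _ | _ | j <;> simp [coeff_X]

lemma vanishesToOrder_C_mul_X (c : R) : VanishesToOrder 1 (C (C c * X)) := by
  have hX : VanishesToOrder 1 (C (X : R[X])) := fun j => by rcases j with _ | j <;> simp [coeff_C]
  simpa [map_mul] using (VanishesToOrder.zero (C (C c))).mul hX

lemma descPochhammer_coeff_one {S : Type*} [Ring S] (k : ℕ) :
    (descPochhammer S (k + 1)).coeff 1 = (-1) ^ k * k.factorial := by
  induction k with
  | zero => simp
  | succ k ih =>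
    rw [descPochhammer_succ_right, mul_sub, coeff_sub, coeff_mul_X, coeff_mul_natCast, ih,
      coeff_zero_eq_eval_zero, descPochhammer_ne_zero_eval_zero _ k.succ_ne_zero]
    have hc : ((k : S) + 1) * (k.factorial : S) = k.factorial * ((k : S) + 1) := by
      norm_cast
      rw [Nat.mul_comm]
    push_cast [Nat.factorial_succ]
    simp [hc, pow_succ, mul_assoc]

lemma coeff_one_weight (hι : ι.Nonempty) :
    (weight R ι).coeff 1 =
      C ((-1) ^ (#ι - 1) * (#ι - 1).factorial : R) * ∏ D ∈ ι, blockPoly R #D := by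
  obtain ⟨k, hk⟩ : ∃ k, #ι = k + 1 := ⟨#ι - 1, by have := hι.card_pos; omega⟩
  rw [weight, coeff_mul_C, hk, descPochhammer_coeff_one]
  simp

open Classical in
lemma coeff_one_coarseningPoly (hρ : ρ.Nonempty) :
    (coarseningPoly R s ρ).coeff 1 = ∑ ι ∈ partitions s with Refines ρ ι,
      C ((-1) ^ (#ι - 1) * (#ι - 1).factorial : R) * ∏ D ∈ ι, blockPoly R #D := by
  rw [coarseningPoly, finsetSum_coeff, sum_filter]
  refine sum_congr rfl fun ι _ => ?_
  split_ifs with h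
  · obtain ⟨b, hb⟩ := hρ
    obtain ⟨D, hD, -⟩ := h b hb
    exact coeff_one_weight ⟨D, hD⟩
  · exact coeff_zero _

variable [DecidableEq α]

namespace IsPartitionOf

variable {t C : Finset α}

lemma sum_card (h : IsPartitionOf s ι) : ∑ C ∈ ι, #C = #s := by
  have hs : ι.biUnion id = s := by
    ext x
    simp only [mem_biUnion, id]
    exact ⟨fun ⟨C, hC, hxC⟩ => h.subset C hC hxC, h.exists_mem x⟩
  rw [← hs, card_biUnion (t := id) fun C hC D hD hne => h.disjoint C hC D hD hne]
  rfl

lemma erase_block (h : IsPartitionOf s ι) (hC : C ∈ ι) : IsPartitionOf (s \ C) (ι.erase C) where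
  empty_notMem h₀ := h.empty_notMem (mem_of_mem_erase h₀)
  subset D hD := subset_sdiff.2 ⟨h.subset D (mem_of_mem_erase hD),
    h.disjoint D (mem_of_mem_erase hD) C hC (ne_of_mem_erase hD)⟩
  disjoint D hD E hE := h.disjoint D (mem_of_mem_erase hD) E (mem_of_mem_erase hE)
  exists_mem x hx := by
    obtain ⟨D, hD, hxD⟩ := h.exists_mem x (mem_sdiff.1 hx).1
    refine ⟨D, mem_erase.2 ⟨?_, hD⟩, hxD⟩
    rintro rfl
    exact (mem_sdiff.1 hx).2 hxD

lemma insert_block (h : IsPartitionOf s ι) (hts : Disjoint t s) (ht : t.Nonempty) :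
    IsPartitionOf (t ∪ s) (insert t ι) where
  empty_notMem h₀ := (mem_insert.1 h₀).elim (fun h' => ht.ne_empty h'.symm) h.empty_notMem
  subset D hD := (mem_insert.1 hD).elim (fun h' => h' ▸ subset_union_left)
    fun hD => (h.subset D hD).trans subset_union_right
  disjoint D hD E hE hne := by
    rcases mem_insert.1 hD with rfl | hDι <;> rcases mem_insert.1 hE with rfl | hEι
    · exact absurd rfl hne
    · exact hts.mono_right (h.subset E hEι)
    · exact (hts.mono_right (h.subset D hDι)).symm
    · exact h.disjoint D hDι E hEι hne
  exists_mem x hx := (mem_union.1 hx).elim (fun hxt => ⟨t, mem_insert_self t ι, hxt⟩)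
    fun hxs => (h.exists_mem x hxs).imp fun D hD => ⟨mem_insert_of_mem hD.1, hD.2⟩

end IsPartitionOf

variable {D : Finset α} {v : α}

/-- The partition of `insert v s` obtained from a partition `ι` of `s` by adding `v` as a new
singleton block (`none`) or to the block `C` of `ι` (`some C`). -/
def extend (v : α) (ι : Finset (Finset α)) : Option (Finset α) → Finset (Finset α)
  | none => insert {v} ι
  | some C => insert (insert v C) (ι.erase C)

def restrict (v : α) (ι : Finset (Finset α)) : Finset (Finset α) :=
  (ι.image (·.erase v)).erase ∅

lemma isPartitionOf_extend (h : IsPartitionOf s ι) (hv : v ∉ s) :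
    ∀ o ∈ insertNone ι, IsPartitionOf (insert v s) (extend v ι o)
  | none, _ => by
    rw [insert_eq]
    exact h.insert_block (disjoint_singleton_left.2 hv) (singleton_nonempty v)
  | some C, hC => by
    have hC : C ∈ ι := some_mem_insertNone.1 hC
    have hs : insert v C ∪ s \ C = insert v s := by
      ext x
      have := @h.subset C hC x
      simp only [mem_union, mem_insert, mem_sdiff]
      tauto
    rw [← hs]
    exact (h.erase_block hC).insert_block
      (disjoint_insert_left.2 ⟨fun hv' => hv (mem_sdiff.1 hv').1, disjoint_sdiff⟩)
      (insert_nonempty v C)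

lemma image_erase_eq_self (hv : ∀ C ∈ ι, v ∉ C) : ι.image (·.erase v) = ι :=
  (image_congr fun C hC => erase_eq_of_notMem (hv C hC)).trans image_id'

lemma restrict_extend (hv : ∀ C ∈ ι, v ∉ C) (h₀ : ∅ ∉ ι) :
    ∀ o ∈ insertNone ι, restrict v (extend v ι o) = ι
  | none, _ => by simp [restrict, extend, image_erase_eq_self hv, erase_insert h₀]
  | some C, hC => by
    have hC : C ∈ ι := some_mem_insertNone.1 hC
    rw [restrict, extend, image_insert, erase_insert (hv C hC),
      image_erase_eq_self fun D hD => hv D (mem_of_mem_erase hD), insert_erase hC,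
      erase_eq_of_notMem h₀]

lemma insert_getD_mem_extend (o : Option (Finset α)) : insert v (o.getD ∅) ∈ extend v ι o := by
  cases o <;> simp [extend]

lemma eq_insert_getD_of_mem_extend (hv : ∀ C ∈ ι, v ∉ C) {o : Option (Finset α)}
    (hD : D ∈ extend v ι o) (hvD : v ∈ D) : D = insert v (o.getD ∅) := by
  cases o with
  | none => exact (mem_insert.1 hD).resolve_right fun hD => hv D hD hvD
  | some C => exact (mem_insert.1 hD).resolve_right fun hD => hv D (mem_of_mem_erase hD) hvD

lemma extend_injOn (hv : ∀ C ∈ ι, v ∉ C) (h₀ : ∅ ∉ ι) :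
    Set.InjOn (extend v ι) (insertNone ι) := by
  intro o ho o' ho' h
  have hvo : ∀ o ∈ insertNone ι, v ∉ o.getD ∅ := by
    rintro (_ | C) hC
    exacts [notMem_empty v, hv C (some_mem_insertNone.1 hC)]
  have h₁ := eq_insert_getD_of_mem_extend hv (h ▸ insert_getD_mem_extend o) (mem_insert_self _ _)
  have h₂ : o.getD ∅ = o'.getD ∅ := by
    simpa [erase_insert (hvo o ho), erase_insert (hvo o' ho')] using congrArg (·.erase v) h₁
  cases o <;> cases o' <;> simp_all

lemma exists_extend_eq (h : IsPartitionOf (insert v s) ι) (hv : v ∉ s) :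
    ∃ ι', IsPartitionOf s ι' ∧ ∃ o ∈ insertNone ι', extend v ι' o = ι := by
  obtain ⟨D, hD, hvD⟩ := h.exists_mem v (mem_insert_self v s)
  by_cases hDv : D = {v}
  · subst hDv
    refine ⟨ι.erase {v}, ?_, none, mem_insertNone.2 (by simp), insert_erase hD⟩
    have hs : insert v s \ {v} = s := by
      rw [insert_sdiff_of_mem _ (mem_singleton_self v), sdiff_singleton_eq_erase,
        erase_eq_of_notMem hv]
    exact hs ▸ h.erase_block hD
  set C := D.erase v
  have hC : C.Nonempty := nonempty_iff_ne_empty.2 fun h₀ =>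
    ((erase_eq_empty_iff D v).1 h₀).elim (h.nonempty hD).ne_empty hDv
  have hCι : C ∉ ι.erase D := fun hC' =>
    ne_of_mem_erase hC' (h.eq_of_subset_of_subset (mem_of_mem_erase hC') hD hC subset_rfl
      (erase_subset v D))
  have hs : C ∪ insert v s \ D = s := by
    ext x
    have := @h.subset D hD x
    by_cases hx : x = v
    · subst hx; simp [C, hv, hvD]
    · simp only [C, mem_union, mem_erase, mem_sdiff, mem_insert, hx] at this ⊢
      tauto
  refine ⟨insert C (ι.erase D), ?_, some C, some_mem_insertNone.2 (mem_insert_self _ _), ?_⟩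
  · rw [← hs]
    exact (h.erase_block hD).insert_block (disjoint_sdiff.mono_left (erase_subset v D)) hC
  · rw [extend, insert_erase hvD, erase_insert hCι, insert_erase hD]

lemma sum_partitions_insert {M : Type*} [AddCommMonoid M] (hv : v ∉ s)
    (f : Finset (Finset α) → M) :
    ∑ ι ∈ partitions (insert v s), f ι =
      ∑ ι ∈ partitions s, (f (insert {v} ι) + ∑ C ∈ ι, f (insert (insert v C) (ι.erase C))) := by
  have hsplit : ∀ ι, f (insert {v} ι) + ∑ C ∈ ι, f (insert (insert v C) (ι.erase C)) =
      ∑ o ∈ insertNone ι, f (extend v ι o) :=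
    fun ι => (sum_insertNone (fun o => f (extend v ι o)) ι).symm
  rw [sum_congr rfl fun ι _ => hsplit ι,
    ← sum_sigma (partitions s) insertNone fun p => f (extend v p.1 p.2)]
  symm
  refine sum_bij (fun p _ => extend v p.1 p.2) ?_ ?_ ?_ fun _ _ => rfl
  · rintro ⟨ι, o⟩ hp
    rw [mem_sigma, mem_partitions] at hp
    exact mem_partitions.2 (isPartitionOf_extend hp.1 hv o hp.2)
  · rintro ⟨ι, o⟩ hp ⟨ι', o'⟩ hp' h
    rw [mem_sigma, mem_partitions] at hp hp'
    have hvι : ∀ C ∈ ι, v ∉ C := fun C hC => hp.1.notMem_of_notMem hv hC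
    have hvι' : ∀ C ∈ ι', v ∉ C := fun C hC => hp'.1.notMem_of_notMem hv hC
    obtain rfl : ι = ι' := by
      rw [← restrict_extend hvι hp.1.empty_notMem o hp.2,
        ← restrict_extend hvι' hp'.1.empty_notMem o' hp'.2]
      exact congrArg (restrict v) h
    obtain rfl := extend_injOn hvι hp.1.empty_notMem hp.2 hp'.2 h
    rfl
  · intro ι hι
    obtain ⟨ι', h', o, ho, rfl⟩ := exists_extend_eq (mem_partitions.1 hι) hv
    exact ⟨⟨ι', o⟩, mem_sigma.2 ⟨mem_partitions.2 h', ho⟩, rfl⟩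

variable {B b : Finset α}

lemma refines_insert_iff : Refines (insert b ρ) ι ↔ (∃ C ∈ ι, b ⊆ C) ∧ Refines ρ ι :=
  forall_mem_insert _ _ _

lemma refines_insert_singleton_iff (hρ : IsPartitionOf s ρ) (hv : v ∉ s) :
    Refines ρ (insert {v} ι) ↔ Refines ρ ι :=
  forall₂_congr fun b hb => by
    rw [exists_mem_insert]
    refine or_iff_right fun hbv => ?_
    obtain ⟨x, hx⟩ := hρ.nonempty hb
    exact hρ.notMem_of_notMem hv hb (mem_singleton.1 (hbv hx) ▸ hx)

lemma refines_insert_insert_erase_iff (hρ : IsPartitionOf s ρ) (hv : v ∉ s) (hD : D ∈ ι) :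
    Refines ρ (insert (insert v D) (ι.erase D)) ↔ Refines ρ ι :=
  forall₂_congr fun b hb => by
    rw [exists_mem_insert, subset_insert_iff_of_notMem (hρ.notMem_of_notMem hv hb),
      ← exists_mem_insert, insert_erase hD]

lemma card_eq_sum_card_of_refines (hρ : IsPartitionOf s ρ) (hι : IsPartitionOf s ι)
    (href : Refines ρ ι) (hD : D ∈ ι) : #D = ∑ b ∈ ρ with b ⊆ D, #b := by
  refine (IsPartitionOf.sum_card ⟨fun h₀ => hρ.empty_notMem (mem_filter.1 h₀).1,
    fun b hb => (mem_filter.1 hb).2, fun b hb b' hb' => hρ.disjoint b (mem_filter.1 hb).1 b'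
    (mem_filter.1 hb').1, fun x hx => ?_⟩).symm
  obtain ⟨b, hb, hxb⟩ := hρ.exists_mem x (hι.subset D hD hx)
  obtain ⟨E, hE, hbE⟩ := href b hb
  exact ⟨b, mem_filter.2 ⟨hb, hι.eq_of_mem_of_mem hE hD (hbE hxb) hx ▸ hbE⟩, hxb⟩

def merge (B b : Finset α) (ρ : Finset (Finset α)) : Finset (Finset α) :=
  insert (B ∪ b) ((ρ.erase B).erase b)

lemma merge_self (hB : B ∈ ρ) : merge B B ρ = ρ := by
  simp [merge, insert_erase hB]

lemma refines_merge_iff :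
    Refines (merge B b ρ) ι ↔ Refines ρ ι ∧ ∃ C ∈ ι, B ∪ b ⊆ C := by
  rw [merge, refines_insert_iff]
  refine ⟨fun ⟨⟨C, hC, hBbC⟩, hR⟩ => ⟨fun d hd => ?_, C, hC, hBbC⟩,
    fun ⟨hR, hBb⟩ => ⟨hBb, fun d hd => hR d (mem_of_mem_erase (mem_of_mem_erase hd))⟩⟩
  by_cases hdB : d = B
  · exact ⟨C, hC, hdB ▸ subset_union_left.trans hBbC⟩
  by_cases hdb : d = b
  · exact ⟨C, hC, hdb ▸ subset_union_right.trans hBbC⟩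
  exact hR d (mem_erase.2 ⟨hdb, mem_erase.2 ⟨hdB, hd⟩⟩)

lemma isPartitionOf_merge (hρ : IsPartitionOf s ρ) (hB : B ∈ ρ) (hb : b ∈ ρ) :
    IsPartitionOf s (merge B b ρ) := by
  by_cases hbB : b = B
  · rwa [hbB, merge_self hB]
  have hs : B ∪ b ∪ (s \ B) \ b = s := by
    ext x
    have := @hρ.subset B hB x
    have := @hρ.subset b hb x
    simp only [mem_union, mem_sdiff]
    tauto
  rw [← hs]
  exact ((hρ.erase_block hB).erase_block (mem_erase.2 ⟨hbB, hb⟩)).insert_block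
    (disjoint_union_left.2 ⟨disjoint_sdiff.mono_right sdiff_subset, disjoint_sdiff⟩)
    ((hρ.nonempty hB).mono subset_union_left)

lemma card_le_card_merge_add_one (hρ : IsPartitionOf s ρ) (hB : B ∈ ρ) (hb : b ∈ ρ) :
    #ρ ≤ #(merge B b ρ) + 1 := by
  by_cases hbB : b = B
  · rw [hbB, merge_self hB]
    omega
  have hBb : B ∪ b ∉ (ρ.erase B).erase b := fun h =>
    ne_of_mem_erase (mem_of_mem_erase h) (hρ.eq_of_subset_of_subset
      (mem_of_mem_erase (mem_of_mem_erase h)) hB (hρ.nonempty hB) subset_union_left subset_rfl)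
  rw [merge, card_insert_of_notMem hBb, card_erase_of_mem (mem_erase.2 ⟨hbB, hb⟩),
    card_erase_of_mem hB]
  omega

lemma weight_insert_singleton (h : {v} ∉ ι) :
    weight R (insert {v} ι) = (X - (#ι : R[X][X])) * weight R ι := by
  have h₁ : blockPoly R #({v} : Finset α) = 1 := by simp [blockPoly]
  rw [weight, weight, card_insert_of_notMem h, descPochhammer_succ_right, prod_insert h, h₁,
    one_mul]
  ring

lemma weight_insert_insert_erase (hι : IsPartitionOf s ι) (hv : v ∉ s) (hD : D ∈ ι) :
    weight R (insert (insert v D) (ι.erase D)) = C (1 - C (#D : R) * X) * weight R ι := by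
  have hvD := hι.notMem_of_notMem hv hD
  have hnew : insert v D ∉ ι.erase D := fun h =>
    hι.notMem_of_notMem hv (mem_of_mem_erase h) (mem_insert_self v D)
  rw [weight, weight, card_insert_of_notMem hnew, card_erase_add_one hD, prod_insert hnew,
    card_insert_of_notMem hvD, blockPoly_succ, ← mul_prod_erase ι _ hD]
  simp only [map_mul]
  ring

open Classical in
theorem coarseningPoly_insert_singleton (hρ : IsPartitionOf s ρ) (hv : v ∉ s) :
    coarseningPoly R (insert v s) (insert {v} ρ) =
      (X - C (C (#s : R) * X)) * coarseningPoly R s ρ := by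
  rw [coarseningPoly, coarseningPoly, sum_partitions_insert hv, mul_sum]
  refine sum_congr rfl fun ι hι => ?_
  have hι := mem_partitions.1 hι
  have h₁ : Refines (insert {v} ρ) (insert {v} ι) ↔ Refines ρ ι := by
    rw [refines_insert_iff, refines_insert_singleton_iff hρ hv]
    exact and_iff_right ⟨{v}, mem_insert_self _ _, subset_rfl⟩
  have h₂ : ∀ D ∈ ι, Refines (insert {v} ρ) (insert (insert v D) (ι.erase D)) ↔ Refines ρ ι :=
    fun D hD => by
      rw [refines_insert_iff, refines_insert_insert_erase_iff hρ hv hD]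
      exact and_iff_right ⟨_, mem_insert_self _ _, singleton_subset_iff.2 (mem_insert_self v D)⟩
  by_cases hR : Refines ρ ι
  · rw [if_pos (h₁.2 hR), sum_congr rfl fun D hD => if_pos ((h₂ D hD).2 hR), if_pos hR,
      weight_insert_singleton fun h => hι.notMem_of_notMem hv h (mem_singleton_self v),
      sum_congr rfl fun D hD => weight_insert_insert_erase hι hv hD, ← sum_mul, ← add_mul,
      ← map_sum, sum_sub_distrib, ← sum_mul, ← map_sum, ← Nat.cast_sum, hι.sum_card]
    simp
  · rw [if_neg (mt h₁.1 hR), sum_eq_zero fun D hD => if_neg (mt (h₂ D hD).1 hR), if_neg hR]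
    simp

open Classical in
lemma sum_ite_superset_eq_sub_sum_merge (hρ : IsPartitionOf s ρ) (hι : IsPartitionOf s ι)
    (hB : B ∈ ρ) (P : R[X][X]) :
    ∑ D ∈ ι, (if B ⊆ D ∧ Refines (ρ.erase B) ι then C (1 - C (#D : R) * X) * P else 0) =
      (if Refines ρ ι then P else 0) -
        ∑ b ∈ ρ, C (C (#b : R) * X) * if Refines (merge B b ρ) ι then P else 0 := by
  have hR_iff : Refines ρ ι ↔ (∃ D ∈ ι, B ⊆ D) ∧ Refines (ρ.erase B) ι := by
    rw [← refines_insert_iff, insert_erase hB]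
  by_cases hR : Refines ρ ι
  · obtain ⟨D₀, hD₀, hBD₀⟩ := hR B hB
    have hD₀_unique : ∀ D ∈ ι, B ⊆ D → D = D₀ := fun D hD hBD =>
      hι.eq_of_subset_of_subset hD hD₀ (hρ.nonempty hB) hBD hBD₀
    have hmerge : ∀ b ∈ ρ, Refines (merge B b ρ) ι ↔ b ⊆ D₀ := fun b hb => by
      simp only [refines_merge_iff, hR, true_and, union_subset_iff]
      exact ⟨fun ⟨D, hD, hBD, hbD⟩ => hD₀_unique D hD hBD ▸ hbD, fun h => ⟨D₀, hD₀, hBD₀, h⟩⟩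
    rw [sum_eq_single_of_mem D₀ hD₀ fun D hD hne => if_neg fun h => hne (hD₀_unique D hD h.1),
      if_pos ⟨hBD₀, (hR_iff.1 hR).2⟩, if_pos hR,
      sum_congr rfl fun b hb => by rw [if_congr (hmerge b hb) rfl rfl, mul_ite, mul_zero],
      ← sum_filter, card_eq_sum_card_of_refines hρ hι hR hD₀, Nat.cast_sum, map_sum, sum_mul,
      map_sub, map_one, sub_mul, one_mul, map_sum, sum_mul]
  · have hmerge : ∀ b ∈ ρ, ¬ Refines (merge B b ρ) ι := fun b _ h => hR (refines_merge_iff.1 h).1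
    rw [sum_eq_zero fun D _ => if_neg fun h => hR (hR_iff.2 ⟨⟨D, ‹_›, h.1⟩, h.2⟩), if_neg hR,
      sum_eq_zero fun b hb => by rw [if_neg (hmerge b hb), mul_zero]]
    simp

open Classical in
theorem coarseningPoly_insert_insert_erase (hρ : IsPartitionOf s ρ) (hv : v ∉ s) (hB : B ∈ ρ) :
    coarseningPoly R (insert v s) (insert (insert v B) (ρ.erase B)) =
      coarseningPoly R s ρ - ∑ b ∈ ρ, C (C (#b : R) * X) * coarseningPoly R s (merge B b ρ) := by
  simp only [coarseningPoly, sum_partitions_insert hv, mul_sum]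
  rw [sum_comm, ← sum_sub_distrib]
  refine sum_congr rfl fun ι hι => ?_
  have hι := mem_partitions.1 hι
  have hρB := hρ.erase_block hB
  have hvB : v ∉ B := hρ.notMem_of_notMem hv hB
  have h₁ : ¬ Refines (insert (insert v B) (ρ.erase B)) (insert {v} ι) := by
    rw [refines_insert_iff, exists_mem_insert]
    rintro ⟨hsub | ⟨D, hD, hsub⟩, -⟩
    · obtain ⟨x, hx⟩ := hρ.nonempty hB
      exact hvB (mem_singleton.1 (hsub (mem_insert_of_mem hx)) ▸ hx)
    · exact hι.notMem_of_notMem hv hD (hsub (mem_insert_self v B))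
  have h₂ : ∀ D ∈ ι,
      Refines (insert (insert v B) (ρ.erase B)) (insert (insert v D) (ι.erase D)) ↔
        B ⊆ D ∧ Refines (ρ.erase B) ι := fun D hD => by
    rw [refines_insert_iff,
      refines_insert_insert_erase_iff hρB (fun h => hv (mem_sdiff.1 h).1) hD,
      exists_mem_insert, insert_subset_insert_iff hvB]
    refine and_congr_left' (or_iff_left ?_)
    rintro ⟨E, hE, hsub⟩
    exact hι.notMem_of_notMem hv (mem_of_mem_erase hE) (hsub (mem_insert_self v B))
  rw [if_neg h₁, zero_add, ← sum_ite_superset_eq_sub_sum_merge hρ hι hB]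
  refine sum_congr rfl fun D hD => ?_
  rw [if_congr (h₂ D hD) rfl rfl, weight_insert_insert_erase hι hv hD]

theorem vanishesToOrder_coarseningPoly (hρ : IsPartitionOf s ρ) :
    VanishesToOrder #ρ (coarseningPoly R s ρ) := by
  induction s using Finset.induction_on generalizing ρ with
  | empty => rw [hρ.eq_empty, card_empty]; exact .zero _
  | insert v s hv ih =>
    obtain ⟨ι, hι, o, ho, rfl⟩ := exists_extend_eq hρ hv
    cases o with
    | none =>
      have hv' : {v} ∉ ι := fun h => hι.notMem_of_notMem hv h (mem_singleton_self v)
      rw [extend, coarseningPoly_insert_singleton hι hv, card_insert_of_notMem hv', add_comm]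
      exact (vanishesToOrder_X.sub (vanishesToOrder_C_mul_X _)).mul (ih hι)
    | some B =>
      have hB := some_mem_insertNone.1 ho
      have hnew : insert v B ∉ ι.erase B := fun h =>
        hι.notMem_of_notMem hv (mem_of_mem_erase h) (mem_insert_self v B)
      rw [extend, coarseningPoly_insert_insert_erase hι hv hB, card_insert_of_notMem hnew,
        card_erase_add_one hB]
      refine (ih hι).sub (VanishesToOrder.sum fun b hb => ?_)
      have := card_le_card_merge_add_one hι hB hb
      exact ((vanishesToOrder_C_mul_X _).mul (ih (isPartitionOf_merge hι hB hb))).mono (by omega)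

end Coarsening

theorem stmt17_general (m : ℕ) (ρ : Finset (Finset (Fin m)))
    (hρ : IsPartition ρ) (l : ℕ) (hl : l < ρ.card - 1) :
    (∑ ι ∈ @Finset.filter _ (fun ι => IsPartition ι ∧ Refines ρ ι)
        (Classical.decPred _) Finset.univ,
      Polynomial.C ((-1 : ℝ) ^ (ι.card - 1) * ((ι.card - 1).factorial : ℝ)) *
        ∏ B ∈ ι, ∏ i ∈ Finset.range (B.card - 1),
          (1 - Polynomial.C ((i : ℝ) + 1) * Polynomial.X)).coeff l = 0 := by
  classical
  have hρ' := Coarsening.isPartition_iff_isPartitionOf_univ.1 hρ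
  have hne : ρ.Nonempty := card_pos.1 (by omega)
  have h := (Coarsening.vanishesToOrder_coarseningPoly (R := ℝ) hρ').coeff_coeff_eq_zero
    (j := 1) (l := l) (by omega)
  rw [Coarsening.coeff_one_coarseningPoly hne] at h
  convert h using 2
  · rfl -- two instance paths to `Semiring ℝ`
  · refine sum_congr ?_ fun _ _ => rfl
    ext ι
    simp [Coarsening.mem_partitions, Coarsening.isPartition_iff_isPartitionOf_univ]

/-- The polynomial
`K(x,ρ) = Σ_{ι ≥ ρ} (-1)^{|ι|-1}(|ι|-1)! ∏_{C∈ι} (1-x)(1-2x)⋯(1-(|C|-1)x)`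
has vanishing coefficient of `x^l` for every `l < |ρ| - 1`. -/
theorem stmt17 (m : ℕ) (hm : 1 ≤ m) (ρ : Finset (Finset (Fin m)))
    (hρ : IsPartition ρ) (l : ℕ) (hl : l < ρ.card - 1) :
    (∑ ι ∈ @Finset.filter _ (fun ι => IsPartition ι ∧ Refines ρ ι)
        (Classical.decPred _) Finset.univ,
      Polynomial.C ((-1 : ℝ) ^ (ι.card - 1) * ((ι.card - 1).factorial : ℝ)) *
        ∏ B ∈ ι, ∏ i ∈ Finset.range (B.card - 1),
          (1 - Polynomial.C ((i : ℝ) + 1) * Polynomial.X)).coeff l = 0 :=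
  stmt17_general m ρ hρ l hl
end

section
/- Suppose g_{1,N} and g_{2,N} are functions on T^d and T^{2d} with ‖g_{1,N} − ρ‖_{l̂^∞} ≤ C_1/N and ‖N g_{2,N} − b‖_{l̂^∞} ≤ C_2/N, where ‖g_{1,N}‖_{l̂^∞} ≤ 1 and ρ is a probability density. Then for any fixed j ≥ 1, defining f_{j,N} = Σ_{π ⊢ [j]} ∏_{P∈π} g_{P,N} with ‖g_{m,N}‖_{l̂^∞} ≤ 2(m−1)!/(m² N^{m−1}) for m ≥ 2, it follows that ‖f_{j,N} − ρ^{⊗j}‖_{l̂^∞} ≤ C_j/N for a constant C_j depending only on j, C_1, C_2. -/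
open Finset

/-- The finset of all set partitions of `Fin j`. -/
noncomputable def partitionsOf (j : ℕ) : Finset (Finset (Finset (Fin j))) :=
  @Finset.filter _ (fun π => IsPartition π) (Classical.decPred _) Finset.univ

lemma mem_partitionsOf {j : ℕ} {σ : Finset (Finset (Fin j))} :
    σ ∈ partitionsOf j ↔ IsPartition σ := by
  classical
  rw [partitionsOf, Finset.mem_filter]
  simp

/-- Telescoping estimate for products of complex numbers of modulus at most 1. -/
lemma stmt19_tele {ι : Type*} (s : Finset ι) (f g : ι → ℂ)
    (hf : ∀ i ∈ s, ‖f i‖ ≤ 1) (hg : ∀ i ∈ s, ‖g i‖ ≤ 1) (ε : ℝ)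
    (h : ∀ i ∈ s, ‖f i - g i‖ ≤ ε) :
    ‖∏ i ∈ s, f i - ∏ i ∈ s, g i‖ ≤ s.card * ε := by
  induction s using Finset.cons_induction with
  | empty => simp
  | cons a s ha ih =>
    rw [Finset.prod_cons, Finset.prod_cons, Finset.card_cons]
    have key : f a * ∏ i ∈ s, f i - g a * ∏ i ∈ s, g i
        = f a * (∏ i ∈ s, f i - ∏ i ∈ s, g i) + (f a - g a) * ∏ i ∈ s, g i := by ring
    rw [key]
    have hε : 0 ≤ ε := le_trans (norm_nonneg _) (h a (Finset.mem_cons_self a s))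
    have hga : ‖∏ i ∈ s, g i‖ ≤ 1 := by
      rw [norm_prod]
      exact Finset.prod_le_one (fun i _ => norm_nonneg _)
        (fun i hi => hg i (Finset.mem_cons_of_mem hi))
    calc ‖f a * (∏ i ∈ s, f i - ∏ i ∈ s, g i) + (f a - g a) * ∏ i ∈ s, g i‖
        ≤ ‖f a‖ * ‖∏ i ∈ s, f i - ∏ i ∈ s, g i‖ + ‖f a - g a‖ * ‖∏ i ∈ s, g i‖ := by
          refine le_trans (norm_add_le _ _) ?_
          rw [norm_mul, norm_mul]
      _ ≤ 1 * (s.card * ε) + ε * 1 := by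
          refine add_le_add (mul_le_mul (hf a (Finset.mem_cons_self a s))
            (ih (fun i hi => hf i (Finset.mem_cons_of_mem hi))
              (fun i hi => hg i (Finset.mem_cons_of_mem hi))
              (fun i hi => h i (Finset.mem_cons_of_mem hi)))
            (norm_nonneg _) zero_le_one)
            (mul_le_mul (h a (Finset.mem_cons_self a s)) hga (norm_nonneg _) hε)
      _ = ((s.card + 1 : ℕ) : ℝ) * ε := by push_cast; ring

/-- The discrete partition (into singletons) is a partition. -/
lemma stmt19_discrete_mem (j : ℕ) :
    Finset.univ.image (fun i : Fin j => ({i} : Finset (Fin j))) ∈ partitionsOf j := by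
  rw [mem_partitionsOf]
  refine ⟨?_, ?_⟩
  · intro h
    obtain ⟨x, -, hx⟩ := Finset.mem_image.1 h
    exact Finset.singleton_ne_empty x hx
  · intro x
    refine ⟨{x}, ⟨Finset.mem_image.2 ⟨x, Finset.mem_univ x, rfl⟩,
      Finset.mem_singleton_self x⟩, ?_⟩
    rintro B ⟨hB, hxB⟩
    obtain ⟨y, -, rfl⟩ := Finset.mem_image.1 hB
    rw [Finset.mem_singleton] at hxB
    rw [hxB]

/-- A partition other than the discrete one has a block of size at least 2. -/
lemma stmt19_big_block (j : ℕ) (σ : Finset (Finset (Fin j)))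
    (hσ : σ ∈ partitionsOf j)
    (hne : σ ≠ Finset.univ.image (fun i : Fin j => ({i} : Finset (Fin j)))) :
    ∃ P ∈ σ, 2 ≤ P.card := by
  rw [mem_partitionsOf] at hσ
  obtain ⟨hemp, hcov⟩ := hσ
  by_contra hcon
  push_neg at hcon
  apply hne
  have hsing : ∀ P ∈ σ, ∃ x, P = {x} := by
    intro P hP
    refine Finset.card_eq_one.1 ?_
    have h1 : P.Nonempty := Finset.nonempty_iff_ne_empty.2 (by rintro rfl; exact hemp hP)
    have h2 := Finset.card_pos.2 h1
    have h3 := hcon P hP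
    omega
  ext B
  constructor
  · intro hB
    obtain ⟨x, rfl⟩ := hsing B hB
    exact Finset.mem_image.2 ⟨x, Finset.mem_univ x, rfl⟩
  · intro hB
    obtain ⟨x, -, rfl⟩ := Finset.mem_image.1 hB
    obtain ⟨Bx, ⟨hBx, hxBx⟩, -⟩ := hcov x
    obtain ⟨y, rfl⟩ := hsing Bx hBx
    rw [Finset.mem_singleton] at hxBx
    subst hxBx
    exact hBx

/-- Propagation of chaos from the size of chaos, on the Fourier side: if the
Fourier coefficients of `g_{1,N}` are within `C₁/N` of those of `ρ` (a
probability density, so its coefficients are bounded by 1), those of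
`N g_{2,N}` within `C₂/N` of those of `b`, and
`‖g_{m,N}‖_{l̂∞} ≤ 2(m−1)!/(m² N^{m−1})` for `m ≥ 2`, then with
`f_{j,N} = Σ_{π ⊢ [j]} ⊗_{P∈π} g_{|P|,N}` one has
`‖f_{j,N} − ρ^{⊗j}‖_{l̂∞} ≤ C_j/N` for a constant `C_j = C(j, C₁, C₂)`.
(The Fourier coefficient of a tensor product is the product of the Fourier
coefficients of the factors, evaluated at the restricted frequencies.) -/
theorem stmt19 (j : ℕ) (hj : 1 ≤ j) (C₁ C₂ : ℝ) :
    ∃ C : ℝ, ∀ (d N : ℕ), 1 ≤ N →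
      ∀ (gh : (m : ℕ) → (Fin m → Fin d → ℤ) → ℂ)
        (rh : (Fin d → ℤ) → ℂ) (bh : (Fin 2 → Fin d → ℤ) → ℂ),
      (∀ ξ : Fin d → ℤ, ‖rh ξ‖ ≤ 1) →
      (∀ ξ : Fin 1 → Fin d → ℤ, ‖gh 1 ξ - rh (ξ 0)‖ ≤ C₁ / N) →
      (∀ ξ : Fin 1 → Fin d → ℤ, ‖gh 1 ξ‖ ≤ 1) →
      (∀ ξ : Fin 2 → Fin d → ℤ, ‖(N : ℂ) * gh 2 ξ - bh ξ‖ ≤ C₂ / N) →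
      (∀ m : ℕ, 2 ≤ m → ∀ ξ : Fin m → Fin d → ℤ,
        ‖gh m ξ‖ ≤ 2 * ((m - 1).factorial : ℝ) / ((m : ℝ) ^ 2 * (N : ℝ) ^ (m - 1))) →
      ∀ ξ : Fin j → Fin d → ℤ,
        ‖(∑ π ∈ partitionsOf j, ∏ P ∈ π,
            gh P.card (fun i => ξ ((P.orderIsoOfFin rfl) i))) -
          ∏ i, rh (ξ i)‖ ≤ C / N := by
  classical
  set M : ℝ := 2 * (j.factorial : ℝ) + 1 with hM
  have hM1 : (1 : ℝ) ≤ M := by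
    have := j.factorial_pos
    have : (1 : ℝ) ≤ (j.factorial : ℝ) := by exact_mod_cast this
    simp only [hM]; nlinarith
  have hM0 : (0 : ℝ) ≤ M := le_trans zero_le_one hM1
  refine ⟨j * C₁ + (2 : ℝ) ^ (2 ^ j) * M ^ (2 ^ j + 1), ?_⟩
  intro d N hN gh rh bh hρ h2 h3 _hb hhigh ξ
  have hN0 : (0 : ℝ) < (N : ℝ) := by exact_mod_cast hN
  have hN1 : (1 : ℝ) ≤ (N : ℝ) := by exact_mod_cast hN
  -- uniform bounds on the factors
  have hB : ∀ m : ℕ, 2 ≤ m → m ≤ j → ∀ ζ : Fin m → Fin d → ℤ, ‖gh m ζ‖ ≤ M / N := by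
    intro m hm hmj ζ
    refine le_trans (hhigh m hm ζ) ?_
    have hfac : ((m - 1).factorial : ℝ) ≤ (j.factorial : ℝ) := by
      exact_mod_cast Nat.factorial_le (by omega)
    have hden : (N : ℝ) ≤ (m : ℝ) ^ 2 * (N : ℝ) ^ (m - 1) := by
      have h1 : (N : ℝ) ^ 1 ≤ (N : ℝ) ^ (m - 1) := by
        apply pow_le_pow_right₀ hN1; omega
      have h2 : (1 : ℝ) ≤ (m : ℝ) ^ 2 := by
        have : (1 : ℝ) ≤ (m : ℝ) := by exact_mod_cast le_trans one_le_two hm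
        nlinarith
      calc (N : ℝ) = 1 * (N : ℝ) ^ 1 := by ring
        _ ≤ (m : ℝ) ^ 2 * (N : ℝ) ^ (m - 1) :=
          mul_le_mul h2 h1 (by positivity) (by positivity)
    refine div_le_div₀ hM0 ?_ hN0 hden
    simp only [hM]; linarith
  have hA : ∀ m : ℕ, 1 ≤ m → m ≤ j → ∀ ζ : Fin m → Fin d → ℤ, ‖gh m ζ‖ ≤ M := by
    intro m hm hmj ζ
    rcases Nat.lt_or_ge m 2 with h | h
    · have hm1 : m = 1 := by omega
      subst hm1
      exact le_trans (h3 ζ) hM1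
    · refine le_trans (hB m h hmj ζ) ?_
      exact div_le_self hM0 hN1
  -- the discrete partition
  set π₀ : Finset (Finset (Fin j)) :=
    Finset.univ.image (fun i : Fin j => ({i} : Finset (Fin j))) with hπ₀
  have hπ₀mem : π₀ ∈ partitionsOf j := stmt19_discrete_mem j
  set T : Finset (Finset (Fin j)) → ℂ :=
    fun σ => ∏ P ∈ σ, gh P.card (fun i => ξ ((P.orderIsoOfFin rfl) i)) with hT
  have hTπ₀ : T π₀ = ∏ x, gh 1 (fun _ => ξ x) := by
    simp only [hT, hπ₀]
    rw [Finset.prod_image (fun a _ b _ h => Finset.singleton_injective h)]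
    refine Finset.prod_congr rfl (fun x _ => ?_)
    show gh 1 _ = _
    congr 1
    funext i
    have hmem := ((({x} : Finset (Fin j)).orderIsoOfFin rfl) i).2
    rw [Finset.mem_singleton] at hmem
    rw [hmem]
  have hsplit : (∑ σ ∈ partitionsOf j, T σ) - ∏ i, rh (ξ i)
      = (∑ σ ∈ (partitionsOf j).erase π₀, T σ) + (T π₀ - ∏ i, rh (ξ i)) := by
    rw [← Finset.sum_erase_add _ _ hπ₀mem]; ring
  rw [hsplit]
  -- bound on the discrete part
  have hdisc : ‖T π₀ - ∏ i, rh (ξ i)‖ ≤ j * (C₁ / N) := by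
    rw [hTπ₀]
    have := stmt19_tele Finset.univ (fun x => gh 1 (fun _ => ξ x)) (fun x => rh (ξ x))
      (fun x _ => h3 _) (fun x _ => hρ _) (C₁ / N) (fun x _ => h2 (fun _ => ξ x))
    simpa using this
  -- bound on each non-discrete term
  have hterm : ∀ σ ∈ (partitionsOf j).erase π₀, ‖T σ‖ ≤ M ^ (2 ^ j + 1) / N := by
    intro σ hσ
    rw [Finset.mem_erase] at hσ
    obtain ⟨hne, hσp⟩ := hσ
    obtain ⟨P, hP, hP2⟩ := stmt19_big_block j σ hσp hne
    have hpart : IsPartition σ := mem_partitionsOf.1 hσp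
    have hcards : ∀ Q ∈ σ, 1 ≤ Q.card ∧ Q.card ≤ j := by
      intro Q hQ
      constructor
      · refine Finset.card_pos.2 (Finset.nonempty_iff_ne_empty.2 ?_)
        rintro rfl; exact hpart.1 hQ
      · exact le_trans (Finset.card_le_univ Q) (by simp)
    have hcardσ : σ.card ≤ 2 ^ j := by
      refine le_trans (Finset.card_le_univ σ) ?_
      simp [Fintype.card_finset]
    have hnorm : ‖T σ‖ = ∏ Q ∈ σ, ‖gh Q.card (fun i => ξ ((Q.orderIsoOfFin rfl) i))‖ := by
      simp only [hT]; exact norm_prod _ _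
    rw [hnorm, ← Finset.mul_prod_erase σ _ hP]
    have hrest : ∏ Q ∈ σ.erase P, ‖gh Q.card (fun i => ξ ((Q.orderIsoOfFin rfl) i))‖
        ≤ M ^ (2 ^ j) := by
      calc ∏ Q ∈ σ.erase P, ‖gh Q.card (fun i => ξ ((Q.orderIsoOfFin rfl) i))‖
          ≤ ∏ _Q ∈ σ.erase P, M := by
            refine Finset.prod_le_prod (fun Q _ => norm_nonneg _) (fun Q hQ => ?_)
            have := hcards Q (Finset.mem_of_mem_erase hQ)
            exact hA Q.card this.1 this.2 _
        _ = M ^ (σ.erase P).card := Finset.prod_const M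
        _ ≤ M ^ (2 ^ j) := by
            apply pow_le_pow_right₀ hM1
            exact le_trans (Finset.card_le_card (Finset.erase_subset P σ)) hcardσ
    calc ‖gh P.card (fun i => ξ ((P.orderIsoOfFin rfl) i))‖
          * ∏ Q ∈ σ.erase P, ‖gh Q.card (fun i => ξ ((Q.orderIsoOfFin rfl) i))‖
        ≤ (M / N) * M ^ (2 ^ j) := by
          refine mul_le_mul (hB P.card hP2 (hcards P hP).2 _) hrest
            (Finset.prod_nonneg (fun Q _ => norm_nonneg _)) (by positivity)
      _ = M ^ (2 ^ j + 1) / N := by rw [pow_succ]; ring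
  have hsum : ‖∑ σ ∈ (partitionsOf j).erase π₀, T σ‖
      ≤ (2 : ℝ) ^ (2 ^ j) * (M ^ (2 ^ j + 1) / N) := by
    refine le_trans (norm_sum_le _ _) ?_
    refine le_trans (Finset.sum_le_sum hterm) ?_
    rw [Finset.sum_const, nsmul_eq_mul]
    refine mul_le_mul_of_nonneg_right ?_ (by positivity)
    have hc : ((partitionsOf j).erase π₀).card ≤ 2 ^ (2 ^ j) := by
      refine le_trans (Finset.card_le_univ _) ?_
      simp [Fintype.card_finset]
    calc (((partitionsOf j).erase π₀).card : ℝ) ≤ ((2 ^ (2 ^ j) : ℕ) : ℝ) := by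
          exact_mod_cast hc
      _ = (2 : ℝ) ^ (2 ^ j) := by push_cast; ring
  calc ‖(∑ σ ∈ (partitionsOf j).erase π₀, T σ) + (T π₀ - ∏ i, rh (ξ i))‖
      ≤ ‖∑ σ ∈ (partitionsOf j).erase π₀, T σ‖ + ‖T π₀ - ∏ i, rh (ξ i)‖ :=
        norm_add_le _ _
    _ ≤ (2 : ℝ) ^ (2 ^ j) * (M ^ (2 ^ j + 1) / N) + j * (C₁ / N) :=
        add_le_add hsum hdisc
    _ = (j * C₁ + (2 : ℝ) ^ (2 ^ j) * M ^ (2 ^ j + 1)) / N := by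
        field_simp; ring
end
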